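/- arXiv:math/0609796 — 2 statements merged into one kernel-verified Lean document; each statement's English description precedes it below -/
import Mathlib

section
/- Define z(λ) = 2|λ|/n − (ℓ(λ) + [λ_1 = n]) for a strict partition λ contained in ρ_n, where [·] is 1 if the condition holds and 0 otherwise. With ι as in the orthogonal Grassmannian case (ι(λ)_i = n − λ_{2δ(λ)+1−i} after padding with a zero to length 2δ(λ)), one has z(ι(λ)) = −z(λ). -/
/-!
Pad `λ` to the even-length set `T` (adding the part `0` when `ℓ(λ)` is odd), so that
`ι(λ) = {n - x | x ∈ T} \ {0}`. Reflecting `T` in `n` turns `|T| = 2δ(λ)` parts of total size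
`|λ|` into parts of total size `2δ(λ) n - |λ|`; the part `0` of `ι(λ)` comes from a part `n`
of `λ`, and the part `n` of `ι(λ)` from the padding zero. Hence `|ι(λ)| = 2δ(λ) n - |λ|`,
`ℓ(ι(λ)) = 2δ(λ) - [λ₁ = n]` and `[ι(λ)₁ = n] = 2δ(λ) - ℓ(λ)`, which add up to `z(ι(λ)) = -z(λ)`.
-/

/-- The orthogonal Grassmannian involution on strict partitions `λ ⊆ ρ_n`,
identified with their sets of parts: pad `λ` with a zero part if its length is
odd (so it has `2δ(λ)` parts), replace each part `x` by `n - x`, and discard a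
resulting zero part (so `ι(λ)ᵢ = n - λ_{2δ(λ)+1-i}`). -/
def orthIota (n : ℕ) (S : Finset ℕ) : Finset ℕ :=
  ((if 2 ∣ S.card then S else insert 0 S).image fun x => n - x).erase 0

namespace OrthIota

open Finset

section Reflect

variable {n : ℕ} {T : Finset ℕ}

theorem mem_image_tsub_iff (hT : ∀ x ∈ T, x ≤ n) {y : ℕ} (hy : y ≤ n) :
    y ∈ T.image (n - ·) ↔ n - y ∈ T := by
  simp only [mem_image]
  constructor
  · rintro ⟨x, hx, rfl⟩
    rwa [Nat.sub_sub_self (hT x hx)]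
  · exact fun h => ⟨n - y, h, Nat.sub_sub_self hy⟩

theorem injOn_tsub (hT : ∀ x ∈ T, x ≤ n) : Set.InjOn (n - ·) (T : Set ℕ) := by
  intro x hx y hy hxy
  have := hT x hx
  have := hT y hy
  simp only at hxy
  omega

theorem sum_erase_zero_image_tsub (hT : ∀ x ∈ T, x ≤ n) :
    ∑ i ∈ (T.image (n - ·)).erase 0, (i : ℚ) = T.card * n - ∑ i ∈ T, (i : ℚ) := by
  rw [sum_erase _ Nat.cast_zero, sum_image (injOn_tsub hT),
    sum_congr rfl fun x hx => Nat.cast_sub (hT x hx), sum_sub_distrib, sum_const, nsmul_eq_mul]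

theorem card_erase_zero_image_tsub (hT : ∀ x ∈ T, x ≤ n) :
    ((T.image (n - ·)).erase 0).card + (if n ∈ T then 1 else 0) = T.card := by
  have hcard : (T.image (n - ·)).card = T.card := card_image_of_injOn (injOn_tsub hT)
  have hzero : 0 ∈ T.image (n - ·) ↔ n ∈ T := by
    simpa using mem_image_tsub_iff hT (Nat.zero_le n)
  split_ifs with h
  · rw [card_erase_add_one (hzero.mpr h), hcard]
  · rw [erase_eq_of_notMem (mt hzero.mp h), hcard, add_zero]

end Reflect

section EvenPad

variable {S : Finset ℕ}

def evenPad (S : Finset ℕ) : Finset ℕ :=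
  if 2 ∣ S.card then S else insert 0 S

theorem orthIota_eq (n : ℕ) (S : Finset ℕ) :
    orthIota n S = ((evenPad S).image (n - ·)).erase 0 :=
  rfl

theorem le_of_mem_evenPad {n : ℕ} (hS : ∀ x ∈ S, x ≤ n) : ∀ x ∈ evenPad S, x ≤ n := by
  unfold evenPad
  split_ifs
  · exact hS
  · simpa using hS

theorem zero_mem_evenPad_iff (h0 : 0 ∉ S) : 0 ∈ evenPad S ↔ ¬ 2 ∣ S.card := by
  unfold evenPad
  split_ifs with h <;> simp [h, h0]

theorem mem_evenPad_of_ne_zero {x : ℕ} (hx : x ≠ 0) : x ∈ evenPad S ↔ x ∈ S := by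
  unfold evenPad
  split_ifs <;> simp [hx]

theorem sum_evenPad (f : ℕ → ℚ) (hf : f 0 = 0) : ∑ i ∈ evenPad S, f i = ∑ i ∈ S, f i := by
  unfold evenPad
  split_ifs
  · rfl
  · rw [sum_insert_zero hf]

theorem cast_card_evenPad (h0 : 0 ∉ S) :
    ((evenPad S).card : ℚ) = S.card + if 2 ∣ S.card then 0 else 1 := by
  unfold evenPad
  split_ifs
  · rw [add_zero]
  · rw [card_insert_of_notMem h0, Nat.cast_succ]

end EvenPad

end OrthIota

open OrthIota in
/-- with `z(λ) = 2|λ|/n - (ℓ(λ) + [λ₁ = n])`, where `[λ₁ = n]` is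
`1` if the largest part of `λ` equals `n` and `0` otherwise, and `ι` the
orthogonal Grassmannian involution, one has `z(ι(λ)) = -z(λ)`. -/
theorem orth_z_neg (n : ℕ) (hn : 0 < n) (S : Finset ℕ) (hS : S ⊆ Finset.Icc 1 n) :
    2 * (∑ i ∈ orthIota n S, (i : ℚ)) / n
        - (((orthIota n S).card : ℚ) + if n ∈ orthIota n S then 1 else 0)
      = -(2 * (∑ i ∈ S, (i : ℚ)) / n
        - ((S.card : ℚ) + if n ∈ S then 1 else 0)) := by
  have h0 : 0 ∉ S := fun h => by simpa using hS h
  have hle : ∀ x ∈ evenPad S, x ≤ n :=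
    le_of_mem_evenPad fun x hx => (Finset.mem_Icc.mp (hS hx)).2
  have hsum : ∑ i ∈ orthIota n S, (i : ℚ) = (evenPad S).card * n - ∑ i ∈ S, (i : ℚ) := by
    rw [orthIota_eq, sum_erase_zero_image_tsub hle, sum_evenPad _ Nat.cast_zero]
  have hcard : ((orthIota n S).card : ℚ) + (if n ∈ S then 1 else 0) = (evenPad S).card := by
    have h := card_erase_zero_image_tsub hle
    simp only [mem_evenPad_of_ne_zero hn.ne'] at h
    rw [orthIota_eq]
    exact_mod_cast h
  have htop : n ∈ orthIota n S ↔ ¬ 2 ∣ S.card := by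
    rw [orthIota_eq, Finset.mem_erase, mem_image_tsub_iff hle le_rfl, Nat.sub_self,
      zero_mem_evenPad_iff h0]
    exact and_iff_right hn.ne'
  rw [cast_card_evenPad h0] at hsum hcard
  rw [hsum, eq_sub_of_add_eq hcard]
  have hn' : (n : ℚ) ≠ 0 := Nat.cast_ne_zero.mpr hn.ne'
  simp only [htop]
  field_simp
  split_ifs <;> ring
end

section
/- Let G be the group of bijections of a set S generated by two involutions p and ι, and let η be the order of p∘ι. Let Γ be the subgroup of bijections of S×S×S generated by (p,p,ι), (p,ι,p), (ι,p,p) acting componentwise. Then the projection of Γ to the first factor surjects onto G, its kernel consists of the elements (1,(pι)^k,(ιp)^k) for k ∈ ℤ, and |Γ| = 2η² (assuming G has order 2η, i.e. p ≠ ι generate a dihedral group of order 2η). -/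
/-!
Put `r = pι`. Since `p` inverts `r` by conjugation, every element of `Γ` has the form
`(r^a, r^b, r^c)` with `a + b + c = 0` or `(p r^a, p r^b, p r^c)` with `a + b + c = 1`
(using `ι = p r`). The hypothesis `|⟨p, ι⟩| = 2η` forces `p ∉ ⟨r⟩`, so the elements of `Γ`
with trivial first coordinate are exactly the powers of `(1, r, r⁻¹) = (p, p, ι) (p, ι, p)`,
an element of order `η`. Hence `|Γ| = |⟨p, ι⟩| · η = 2η²`.
-/

theorem Subgroup.card_eq_card_map_mul_card_ker_inf {G M : Type*} [Group G] [Group M]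
    (H : Subgroup G) (f : G →* M) :
    Nat.card H = Nat.card (H.map f) * Nat.card ↥(f.ker ⊓ H) := by
  rw [(f.domRestrict H).ker.card_eq_card_quotient_mul_card_subgroup,
    Nat.card_congr (QuotientGroup.quotientKerEquivRange _).toEquiv, MonoidHom.domRestrict_range,
    MonoidHom.ker_domRestrict, ← Subgroup.subgroupOf_map_subtype,
    Subgroup.card_map_of_injective H.subtype_injective]

section Dihedral

variable {G : Type*} [Group G] {p r : G}

theorem zpow_mul_eq_mul_zpow_neg (hp : p * p = 1) (hpr : p * r * p = r⁻¹) (k : ℤ) :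
    r ^ k * p = p * r ^ (-k) := by
  have hpinv : p⁻¹ = p := inv_eq_of_mul_eq_one_right hp
  have hconj : p * r ^ (-k) * p⁻¹ = r ^ k := by
    rw [← conj_zpow, hpinv, hpr, inv_zpow', neg_neg]
  rw [← hconj, hpinv, mul_assoc, hp, mul_one]

def dihedralTriples (hp : p * p = 1) (hpr : p * r * p = r⁻¹) : Subgroup (G × G × G) where
  carrier := {x | ∃ a b c : ℤ, (a + b + c = 0 ∧ x = (r ^ a, r ^ b, r ^ c)) ∨
    (a + b + c = 1 ∧ x = (p * r ^ a, p * r ^ b, p * r ^ c))}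
  one_mem' := ⟨0, 0, 0, .inl ⟨rfl, by simp only [zpow_zero]; rfl⟩⟩
  mul_mem' := by
    have h1 : ∀ a b : ℤ, r ^ a * (p * r ^ b) = p * r ^ (b - a) := fun a b => by
      rw [← mul_assoc, zpow_mul_eq_mul_zpow_neg hp hpr, mul_assoc, ← zpow_add, neg_add_eq_sub]
    have h2 : ∀ a b : ℤ, p * r ^ a * (p * r ^ b) = r ^ (b - a) := fun a b => by
      rw [mul_assoc, h1, ← mul_assoc, hp, one_mul]
    rintro _ _ ⟨a, b, c, ⟨hx, rfl⟩ | ⟨hx, rfl⟩⟩ ⟨a', b', c', ⟨hy, rfl⟩ | ⟨hy, rfl⟩⟩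
    · exact ⟨a + a', b + b', c + c', .inl ⟨by omega, by simp [zpow_add]⟩⟩
    · exact ⟨a' - a, b' - b, c' - c, .inr ⟨by omega, by simp [h1]⟩⟩
    · exact ⟨a + a', b + b', c + c', .inr ⟨by omega, by simp [mul_assoc, zpow_add]⟩⟩
    · exact ⟨a' - a, b' - b, c' - c, .inl ⟨by omega, by simp [h2]⟩⟩
  inv_mem' := by
    have h : ∀ a : ℤ, (p * r ^ a)⁻¹ = p * r ^ a := fun a => by
      rw [mul_inv_rev, inv_eq_of_mul_eq_one_right hp, ← zpow_neg,
        zpow_mul_eq_mul_zpow_neg hp hpr, neg_neg]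
    rintro _ ⟨a, b, c, ⟨hx, rfl⟩ | ⟨hx, rfl⟩⟩
    · exact ⟨-a, -b, -c, .inl ⟨by omega, by simp⟩⟩
    · exact ⟨a, b, c, .inr ⟨hx, by simp [h]⟩⟩

end Dihedral

section Involutions

variable {G : Type*} [Group G] {p ι : G}

theorem mul_inv_rev_of_involutions (hp : p * p = 1) (hι : ι * ι = 1) :
    (p * ι)⁻¹ = ι * p := by
  rw [mul_inv_rev, inv_eq_of_mul_eq_one_right hp, inv_eq_of_mul_eq_one_right hι]

theorem conj_mul_eq_inv_of_involutions (hp : p * p = 1) (hι : ι * ι = 1) :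
    p * (p * ι) * p = (p * ι)⁻¹ := by
  rw [← mul_assoc, hp, one_mul, mul_inv_rev_of_involutions hp hι]

theorem notMem_zpowers_mul_of_card_closure (hp : p * p = 1) (hι : ι * ι = 1)
    (hcard : Nat.card (Subgroup.closure ({p, ι} : Set G)) = 2 * orderOf (p * ι)) :
    p ∉ Subgroup.zpowers (p * ι) := by
  rintro ⟨m, hm : (p * ι) ^ m = p⟩
  have hclosure : Subgroup.closure ({p, ι} : Set G) = Subgroup.zpowers (p * ι) := by
    refine le_antisymm ((Subgroup.closure_le _).2 ?_) (Subgroup.zpowers_le.2 ?_)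
    · refine Set.insert_subset_iff.2 ⟨⟨m, hm⟩, Set.singleton_subset_iff.2 ?_⟩
      show ∃ k : ℤ, (p * ι) ^ k = ι
      exact ⟨m + 1, by rw [zpow_add, hm, zpow_one, ← mul_assoc, hp, one_mul]⟩
    · exact mul_mem (Subgroup.subset_closure (by simp)) (Subgroup.subset_closure (by simp))
  have hinfinite : ¬IsOfFinOrder (p * ι) := by
    rw [← orderOf_eq_zero_iff]
    rw [hclosure, Nat.card_zpowers] at hcard
    omega
  -- `(pι)^(2m) = p² = 1` forces `m = 0`, and then `pι = ι` is an involution.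
  have hm0 : m = 0 := by
    by_contra hm0
    exact hinfinite (isOfFinOrder_iff_zpow_eq_one.2 ⟨m + m, by omega, by rw [zpow_add, hm, hp]⟩)
  rw [hm0, zpow_zero] at hm
  exact hinfinite (isOfFinOrder_iff_pow_eq_one.2 ⟨2, two_pos, by rw [← hm, one_mul, sq, hι]⟩)

abbrev gammaGroup (p ι : G) : Subgroup (G × G × G) :=
  Subgroup.closure {(p, p, ι), (p, ι, p), (ι, p, p)}

theorem map_fst_gammaGroup (p ι : G) :
    (gammaGroup p ι).map (MonoidHom.fst G (G × G)) = Subgroup.closure {p, ι} := by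
  rw [MonoidHom.map_closure]
  simp only [Set.image_insert_eq, Set.image_singleton, MonoidHom.coe_fst, Set.insert_idem]

theorem gammaGroup_le_dihedralTriples (hp : p * p = 1) (hι : ι * ι = 1) :
    gammaGroup p ι ≤ dihedralTriples hp (conj_mul_eq_inv_of_involutions hp hι) := by
  have hι' : p * (p * ι) ^ (1 : ℤ) = ι := by rw [zpow_one, ← mul_assoc, hp, one_mul]
  rw [Subgroup.closure_le]
  rintro x (rfl | rfl | rfl)
  · exact ⟨0, 0, 1, .inr ⟨rfl, by simp only [zpow_zero, mul_one, hι']⟩⟩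
  · exact ⟨0, 1, 0, .inr ⟨rfl, by simp only [zpow_zero, mul_one, hι']⟩⟩
  · exact ⟨1, 0, 0, .inr ⟨rfl, by simp only [zpow_zero, mul_one, hι']⟩⟩

theorem mk_one_mul_mem_gammaGroup (hp : p * p = 1) : (1, p * ι, ι * p) ∈ gammaGroup p ι := by
  have hmul : ((p, p, ι) : G × G × G) * (p, ι, p) = (1, p * ι, ι * p) := by
    rw [Prod.mk_mul_mk, Prod.mk_mul_mk, hp]
  rw [← hmul]
  exact mul_mem (Subgroup.subset_closure (by simp)) (Subgroup.subset_closure (by simp))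

theorem ker_fst_inf_gammaGroup (hp : p * p = 1) (hι : ι * ι = 1)
    (hpι : p ∉ Subgroup.zpowers (p * ι)) :
    (MonoidHom.fst G (G × G)).ker ⊓ gammaGroup p ι = Subgroup.zpowers (1, p * ι, ι * p) := by
  refine le_antisymm ?_ (Subgroup.zpowers_le.2 ⟨rfl, mk_one_mul_mem_gammaGroup hp⟩)
  rintro x ⟨hx1 : x.1 = 1, hx⟩
  obtain ⟨a, b, c, ⟨habc, rfl⟩ | ⟨-, rfl⟩⟩ := gammaGroup_le_dihedralTriples hp hι hx
  · have ha : (p * ι) ^ a = 1 := hx1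
    have hc : (p * ι) ^ c = (ι * p) ^ b := by
      rw [show c = -a + -b by omega, zpow_add, zpow_neg, ha, inv_one, one_mul, zpow_neg,
        ← inv_zpow, mul_inv_rev_of_involutions hp hι]
    exact ⟨b, by simp only [ha, hc, Prod.pow_mk, one_zpow]⟩
  · refine absurd ⟨-a, ?_⟩ hpι
    show (p * ι) ^ (-a) = p
    rw [zpow_neg, inv_eq_of_mul_eq_one_left hx1]

theorem orderOf_mk_one_mul (hp : p * p = 1) (hι : ι * ι = 1) :
    orderOf ((1, p * ι, ι * p) : G × G × G) = orderOf (p * ι) := by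
  rw [Prod.orderOf, Prod.orderOf, orderOf_one, ← mul_inv_rev_of_involutions hp hι, orderOf_inv,
    Nat.lcm_self, Nat.lcm_one_left]

end Involutions

/-- let `p, ι` be involutive bijections of a set `S`, let `η` be
the order of `p∘ι`, and assume the group `G = ⟨p, ι⟩` has order `2η`. Let `Γ`
be the group of bijections of `S × S × S` generated by the componentwise maps
`(p,p,ι)`, `(p,ι,p)`, `(ι,p,p)` (a subgroup of `Perm S × Perm S × Perm S`
acting componentwise). Then the projection of `Γ` to the first factor surjects
onto `G`, its kernel consists exactly of the elements `(1, (pι)^k, (ιp)^k)`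
for `k ∈ ℤ`, and `|Γ| = 2η²`. -/
theorem gamma_group (S : Type*) (p ι : Equiv.Perm S) (η : ℕ)
    (hp : p * p = 1) (hι : ι * ι = 1)
    (hη : orderOf (p * ι) = η)
    (hG : Nat.card (Subgroup.closure ({p, ι} : Set (Equiv.Perm S))) = 2 * η) :
    (Subgroup.closure ({(p,p,ι), (p,ι,p), (ι,p,p)} :
          Set (Equiv.Perm S × Equiv.Perm S × Equiv.Perm S))).map
        (MonoidHom.fst (Equiv.Perm S) (Equiv.Perm S × Equiv.Perm S))
      = Subgroup.closure ({p, ι} : Set (Equiv.Perm S)) ∧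
    (∀ x ∈ Subgroup.closure ({(p,p,ι), (p,ι,p), (ι,p,p)} :
          Set (Equiv.Perm S × Equiv.Perm S × Equiv.Perm S)),
        x.1 = 1 → ∃ k : ℤ, x = (1, (p*ι)^k, (ι*p)^k)) ∧
    (∀ k : ℤ, ((1, (p*ι)^k, (ι*p)^k) : Equiv.Perm S × Equiv.Perm S × Equiv.Perm S)
        ∈ Subgroup.closure ({(p,p,ι), (p,ι,p), (ι,p,p)} :
            Set (Equiv.Perm S × Equiv.Perm S × Equiv.Perm S))) ∧
    Nat.card (Subgroup.closure ({(p,p,ι), (p,ι,p), (ι,p,p)} :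
          Set (Equiv.Perm S × Equiv.Perm S × Equiv.Perm S))) = 2 * η ^ 2 := by
  have hker := ker_fst_inf_gammaGroup hp hι
    (notMem_zpowers_mul_of_card_closure hp hι (hη ▸ hG))
  refine ⟨map_fst_gammaGroup p ι, fun x hx hx1 => ?_, fun k => ?_, ?_⟩
  · have hmem : x ∈ Subgroup.zpowers (1, p * ι, ι * p) := by rw [← hker]; exact ⟨hx1, hx⟩
    obtain ⟨k, rfl⟩ := Subgroup.mem_zpowers_iff.1 hmem
    exact ⟨k, by simp only [Prod.pow_mk, one_zpow]⟩
  · have hk := Subgroup.zpow_mem_zpowers ((1, p * ι, ι * p) : Equiv.Perm S × _ × _) k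
    rw [← hker] at hk
    simp only [Prod.pow_mk, one_zpow] at hk
    exact hk.2
  · rw [Subgroup.card_eq_card_map_mul_card_ker_inf _ (MonoidHom.fst _ _), map_fst_gammaGroup, hker,
      Nat.card_zpowers, orderOf_mk_one_mul hp hι, hG, hη]
    ring
end
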